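/- Let V : [0,∞) → M_n(ℂ) be continuous with V(x)† = V(x) for all x, and let κ, μ be real numbers with κ² ≠ μ². Let Φ, Ψ : [0,∞) → M_n(ℂ) be twice continuously differentiable with Φ''(x) = (V(x) + κ²·I)·Φ(x) and Ψ''(x) = (V(x) + μ²·I)·Ψ(x) for all x ≥ 0. Let W⁺ : [0,∞) → M_n(ℂ) be differentiable with W⁺(x)† = W⁺(x) and (W⁺)'(x) = W⁺(x)·Φ(x)†Φ(x)·W⁺(x) for all x. Define q(x) := Φ'(x)†·Ψ(x) − Φ(x)†·Ψ'(x) and T(x) := Ψ(x) + (κ²−μ²)⁻¹·Φ(x)·W⁺(x)·q(x). Then for all x ≥ 0: T(x)†·T(x) − Ψ(x)†·Ψ(x) = (κ²−μ²)⁻²·(d/dx)[q(x)†·W⁺(x)·q(x)]. (Identity (6.168): the difference of the normalization integrands is an exact derivative; integrating it yields Theorem 6.6(b), the invariance of the Gel'fand–Levitan normalization matrices C_j, 1 ≤ j ≤ N−1, under removal of the bound state at k = iκ_N.) -/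

import Mathlib

/-!
The Wronskian `q = Φ'ᴴΨ - ΦᴴΨ'` satisfies `q' = (κ² - μ²) ΦᴴΨ`, since `V` is Hermitian and `κ` is
real. Together with `(W⁺)' = W⁺ΦᴴΦW⁺` the product rule gives
`(qᴴW⁺q)' = (κ² - μ²)(ΨᴴΦW⁺q + qᴴW⁺ΦᴴΨ) + qᴴW⁺ΦᴴΦW⁺q`, and expanding `TᴴT - ΨᴴΨ` with `W⁺`
Hermitian yields exactly `(κ² - μ²)⁻²` times this.
-/

open Matrix Set

attribute [local instance] Matrix.normedAddCommGroup Matrix.normedSpace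

section Calculus

variable {𝕜 R : Type*} [NontriviallyNormedField 𝕜] {l m n : Type*} {s : Set 𝕜} {x : 𝕜}

theorem HasDerivWithinAt.matrix_mul [NormedRing R] [NormedAlgebra 𝕜 R] [Fintype m] [Fintype n]
    {f : 𝕜 → Matrix l m R} {g : 𝕜 → Matrix m n R} {f' : Matrix l m R} {g' : Matrix m n R}
    (hf : HasDerivWithinAt f f' s x) (hg : HasDerivWithinAt g g' s x) :
    HasDerivWithinAt (fun t => f t * g t) (f' * g x + f x * g') s x := by
  refine hasDerivWithinAt_pi.2 fun i => hasDerivWithinAt_pi.2 fun j => ?_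
  have hf_apply (i k) : HasDerivWithinAt (fun t => f t i k) (f' i k) s x :=
    hasDerivWithinAt_pi.1 (hasDerivWithinAt_pi.1 hf i) k
  have hg_apply (k j) : HasDerivWithinAt (fun t => g t k j) (g' k j) s x :=
    hasDerivWithinAt_pi.1 (hasDerivWithinAt_pi.1 hg k) j
  simpa only [mul_apply, Matrix.add_apply, Finset.sum_add_distrib] using
    HasDerivWithinAt.fun_sum fun k _ => (hf_apply i k).fun_mul (hg_apply k j)

theorem HasDerivWithinAt.matrix_conjTranspose [Fintype m] [Fintype n] [StarRing 𝕜]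
    [TrivialStar 𝕜] [NormedAddCommGroup R] [NormedSpace 𝕜 R] [StarAddMonoid R] [StarModule 𝕜 R]
    [ContinuousStar R] {f : 𝕜 → Matrix m n R} {f' : Matrix m n R}
    (hf : HasDerivWithinAt f f' s x) :
    HasDerivWithinAt (fun t => (f t)ᴴ) f'ᴴ s x :=
  hasDerivWithinAt_pi.2 fun i => hasDerivWithinAt_pi.2 fun j =>
    (hasDerivWithinAt_pi.1 (hasDerivWithinAt_pi.1 hf j) i).star

variable [StarRing 𝕜] [TrivialStar 𝕜] [NormedRing R] [StarRing R] [NormedAlgebra 𝕜 R]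
  [StarModule 𝕜 R] [ContinuousStar R]

theorem HasDerivWithinAt.conjTranspose_mul_mul [Fintype l] [Fintype n] {q : 𝕜 → Matrix l n R}
    {W : 𝕜 → Matrix l l R} {q' : Matrix l n R} {W' : Matrix l l R}
    (hq : HasDerivWithinAt q q' s x) (hW : HasDerivWithinAt W W' s x) :
    HasDerivWithinAt (fun t => (q t)ᴴ * W t * q t)
      (q'ᴴ * W x * q x + (q x)ᴴ * W' * q x + (q x)ᴴ * W x * q') s x :=
  ((hq.matrix_conjTranspose.matrix_mul hW).matrix_mul hq).congr_deriv (by rw [Matrix.add_mul])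

theorem hasDerivWithinAt_wronskian [Fintype l] [Fintype m] [Fintype n]
    {Φ Φ' : 𝕜 → Matrix m l R} {Φ'' : Matrix m l R} {Ψ Ψ' : 𝕜 → Matrix m n R} {Ψ'' : Matrix m n R}
    (hΦ : HasDerivWithinAt Φ (Φ' x) s x) (hΦ' : HasDerivWithinAt Φ' Φ'' s x)
    (hΨ : HasDerivWithinAt Ψ (Ψ' x) s x) (hΨ' : HasDerivWithinAt Ψ' Ψ'' s x) :
    HasDerivWithinAt (fun t => (Φ' t)ᴴ * Ψ t - (Φ t)ᴴ * Ψ' t)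
      (Φ''ᴴ * Ψ x - (Φ x)ᴴ * Ψ'') s x :=
  ((hΦ'.matrix_conjTranspose.matrix_mul hΨ).sub
    (hΦ.matrix_conjTranspose.matrix_mul hΨ')).congr_deriv (by noncomm_ring)

end Calculus

namespace Matrix

variable {R : Type*} {l m n : Type*}

theorem IsHermitian.conjTranspose_shift_mul_sub_mul_shift [CommRing R] [StarRing R]
    [Fintype m] [DecidableEq m] {V : Matrix m m R} (hV : V.IsHermitian) {a : R}
    (ha : star a = a) (b : R) (Φ : Matrix m l R) (Ψ : Matrix m n R) :
    ((V + a • 1) * Φ)ᴴ * Ψ - Φᴴ * ((V + b • 1) * Ψ) = (a - b) • (Φᴴ * Ψ) := by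
  rw [conjTranspose_mul, conjTranspose_add, conjTranspose_smul, hV.eq, conjTranspose_one, ha]
  simp only [Matrix.mul_add, Matrix.add_mul, Matrix.mul_smul, Matrix.smul_mul,
    Matrix.mul_one, Matrix.one_mul, Matrix.mul_assoc, sub_smul]
  abel

/-- The bracket on the right is the derivative of `qᴴWq` when `q' = e • ΦᴴΨ` and `W' = WΦᴴΦW`. -/
theorem IsHermitian.conjTranspose_mul_self_add_inv_smul_sub [Field R] [StarRing R] [Fintype l]
    [Fintype m] {W : Matrix l l R} (hW : W.IsHermitian) {e : R} (he : star e = e)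
    (Φ : Matrix m l R) (Ψ : Matrix m n R) (q : Matrix l n R) :
    (Ψ + e⁻¹ • (Φ * W * q))ᴴ * (Ψ + e⁻¹ • (Φ * W * q)) - Ψᴴ * Ψ =
      e⁻¹ ^ 2 • ((e • (Φᴴ * Ψ))ᴴ * W * q + qᴴ * (W * (Φᴴ * Φ) * W) * q +
        qᴴ * W * (e • (Φᴴ * Ψ))) := by
  have he_inv : star e⁻¹ = e⁻¹ := by rw [star_inv₀, he]
  have he_cancel : e⁻¹ ^ 2 * e = e⁻¹ := by
    simpa only [inv_inv, sq, mul_assoc, mul_comm e e⁻¹] using mul_inv_mul_cancel e⁻¹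
  simp only [conjTranspose_add, conjTranspose_smul, conjTranspose_mul,
    conjTranspose_conjTranspose, hW.eq, he, he_inv, Matrix.add_mul, Matrix.mul_add,
    Matrix.smul_mul, Matrix.mul_smul, smul_add, smul_smul, he_cancel, Matrix.mul_assoc]
  match_scalars <;> ring

end Matrix

theorem normalization_integrand_exact_derivative_general {n : ℕ}
    (V : ℝ → Matrix (Fin n) (Fin n) ℂ) (κ μ : ℝ)
    (Φ Φ' Φ'' Ψ Ψ' Ψ'' Wp : ℝ → Matrix (Fin n) (Fin n) ℂ)
    (hVherm : ∀ x ≥ (0:ℝ), (V x)ᴴ = V x)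
    (hΦ1 : ∀ x ∈ Set.Ici (0:ℝ), HasDerivWithinAt Φ (Φ' x) (Set.Ici (0:ℝ)) x)
    (hΦ2 : ∀ x ∈ Set.Ici (0:ℝ), HasDerivWithinAt Φ' (Φ'' x) (Set.Ici (0:ℝ)) x)
    (hΨ1 : ∀ x ∈ Set.Ici (0:ℝ), HasDerivWithinAt Ψ (Ψ' x) (Set.Ici (0:ℝ)) x)
    (hΨ2 : ∀ x ∈ Set.Ici (0:ℝ), HasDerivWithinAt Ψ' (Ψ'' x) (Set.Ici (0:ℝ)) x)
    (hΦeq : ∀ x ≥ (0:ℝ), Φ'' x = (V x + ((κ:ℂ)^2) • 1) * Φ x)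
    (hΨeq : ∀ x ≥ (0:ℝ), Ψ'' x = (V x + ((μ:ℂ)^2) • 1) * Ψ x)
    (hWpherm : ∀ x ≥ (0:ℝ), (Wp x)ᴴ = Wp x)
    (hWp : ∀ x ∈ Set.Ici (0:ℝ),
      HasDerivWithinAt Wp (Wp x * ((Φ x)ᴴ * Φ x) * Wp x) (Set.Ici (0:ℝ)) x) :
    ∀ x ≥ (0:ℝ), ∃ d : Matrix (Fin n) (Fin n) ℂ,
      HasDerivWithinAt
        (fun t => ((Φ' t)ᴴ * Ψ t - (Φ t)ᴴ * Ψ' t)ᴴ * Wp t *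
          ((Φ' t)ᴴ * Ψ t - (Φ t)ᴴ * Ψ' t)) d (Set.Ici (0:ℝ)) x ∧
      (Ψ x + (((κ:ℂ)^2 - (μ:ℂ)^2)⁻¹ : ℂ) •
          (Φ x * Wp x * ((Φ' x)ᴴ * Ψ x - (Φ x)ᴴ * Ψ' x)))ᴴ *
        (Ψ x + (((κ:ℂ)^2 - (μ:ℂ)^2)⁻¹ : ℂ) •
          (Φ x * Wp x * ((Φ' x)ᴴ * Ψ x - (Φ x)ᴴ * Ψ' x)))
        - (Ψ x)ᴴ * Ψ x
        = ((((κ:ℂ)^2 - (μ:ℂ)^2)⁻¹ : ℂ) ^ 2) • d := by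
  intro x hx
  have hreal (a : ℝ) : star ((a : ℂ) ^ 2) = (a : ℂ) ^ 2 := by
    rw [← Complex.ofReal_pow, Complex.star_def, Complex.conj_ofReal]
  have hq := hasDerivWithinAt_wronskian (hΦ1 x hx) (hΦ2 x hx) (hΨ1 x hx) (hΨ2 x hx)
  rw [hΦeq x hx, hΨeq x hx,
    IsHermitian.conjTranspose_shift_mul_sub_mul_shift (hVherm x hx) (hreal κ)] at hq
  refine ⟨_, hq.conjTranspose_mul_mul (hWp x hx), ?_⟩
  exact IsHermitian.conjTranspose_mul_self_add_inv_smul_sub (hWpherm x hx)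
    (by rw [star_sub, hreal, hreal]) _ _ _

/-- Identity (6.168): with `q(x) = Φ'(x)†·Ψ(x) − Φ(x)†·Ψ'(x)` and
`T(x) = Ψ(x) + (κ²−μ²)⁻¹·Φ(x)·W⁺(x)·q(x)`, the difference of the normalization
integrands is an exact derivative:
`T(x)†·T(x) − Ψ(x)†·Ψ(x) = (κ²−μ²)⁻²·(d/dx)[q(x)†·W⁺(x)·q(x)]` for all `x ≥ 0`. -/
theorem normalization_integrand_exact_derivative {n : ℕ}
    (V : ℝ → Matrix (Fin n) (Fin n) ℂ) (κ μ : ℝ)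
    (hκμ : κ ^ 2 ≠ μ ^ 2)
    (Φ Φ' Φ'' Ψ Ψ' Ψ'' Wp : ℝ → Matrix (Fin n) (Fin n) ℂ)
    (hVc : ContinuousOn V (Set.Ici (0:ℝ)))
    (hVherm : ∀ x ≥ (0:ℝ), (V x)ᴴ = V x)
    (hΦ1 : ∀ x ∈ Set.Ici (0:ℝ), HasDerivWithinAt Φ (Φ' x) (Set.Ici (0:ℝ)) x)
    (hΦ2 : ∀ x ∈ Set.Ici (0:ℝ), HasDerivWithinAt Φ' (Φ'' x) (Set.Ici (0:ℝ)) x)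
    (hΦ''c : ContinuousOn Φ'' (Set.Ici (0:ℝ)))
    (hΨ1 : ∀ x ∈ Set.Ici (0:ℝ), HasDerivWithinAt Ψ (Ψ' x) (Set.Ici (0:ℝ)) x)
    (hΨ2 : ∀ x ∈ Set.Ici (0:ℝ), HasDerivWithinAt Ψ' (Ψ'' x) (Set.Ici (0:ℝ)) x)
    (hΨ''c : ContinuousOn Ψ'' (Set.Ici (0:ℝ)))
    (hΦeq : ∀ x ≥ (0:ℝ), Φ'' x = (V x + ((κ:ℂ)^2) • 1) * Φ x)
    (hΨeq : ∀ x ≥ (0:ℝ), Ψ'' x = (V x + ((μ:ℂ)^2) • 1) * Ψ x)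
    (hWpherm : ∀ x ≥ (0:ℝ), (Wp x)ᴴ = Wp x)
    (hWp : ∀ x ∈ Set.Ici (0:ℝ),
      HasDerivWithinAt Wp (Wp x * ((Φ x)ᴴ * Φ x) * Wp x) (Set.Ici (0:ℝ)) x) :
    ∀ x ≥ (0:ℝ), ∃ d : Matrix (Fin n) (Fin n) ℂ,
      HasDerivWithinAt
        (fun t => ((Φ' t)ᴴ * Ψ t - (Φ t)ᴴ * Ψ' t)ᴴ * Wp t *
          ((Φ' t)ᴴ * Ψ t - (Φ t)ᴴ * Ψ' t)) d (Set.Ici (0:ℝ)) x ∧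
      (Ψ x + (((κ:ℂ)^2 - (μ:ℂ)^2)⁻¹ : ℂ) •
          (Φ x * Wp x * ((Φ' x)ᴴ * Ψ x - (Φ x)ᴴ * Ψ' x)))ᴴ *
        (Ψ x + (((κ:ℂ)^2 - (μ:ℂ)^2)⁻¹ : ℂ) •
          (Φ x * Wp x * ((Φ' x)ᴴ * Ψ x - (Φ x)ᴴ * Ψ' x)))
        - (Ψ x)ᴴ * Ψ x
        = ((((κ:ℂ)^2 - (μ:ℂ)^2)⁻¹ : ℂ) ^ 2) • d :=
  normalization_integrand_exact_derivative_general V κ μ Φ Φ' Φ'' Ψ Ψ' Ψ'' Wp hVherm hΦ1 hΦ2 hΨ1 hΨ2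
    hΦeq hΨeq hWpherm hWp
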